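/- The function f(x₁,x₂) = a₁·x₁²/√(x₁x₂) − a₂·√(x₁x₂) is convex on the domain {(x₁,x₂) : x₁ > 0, x₂ > 0}, for any positive constants a₁, a₂. -/

import Mathlib

/-!
The geometric mean `√(x₁ x₂)` is concave on the quadrant, and `(x, y) ↦ x² / y` is convex on
`y > 0` and nonincreasing in `y`; hence `x₁² / √(x₁ x₂)` is convex, and subtracting a positive
multiple of the concave geometric mean keeps it convex.
-/

open Set

theorem convexOn_sq_div : ConvexOn ℝ (univ ×ˢ Ioi 0) fun p : ℝ × ℝ => p.1 ^ 2 / p.2 := by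
  refine ⟨convex_univ.prod (convex_Ioi 0), ?_⟩
  rintro ⟨x, b⟩ ⟨-, hb : 0 < b⟩ ⟨y, c⟩ ⟨-, hc : 0 < c⟩ t u ht hu htu
  have hden : 0 < t * b + u * c := convex_Ioi (0 : ℝ) hb hc ht hu htu
  simp only [Prod.fst_add, Prod.snd_add, Prod.smul_fst, Prod.smul_snd, smul_eq_mul]
  rw [div_le_iff₀ hden]
  -- the gap is `t u (x c - y b)² / (b c)`
  have key : t * (x ^ 2 / b) * (u * c) + u * (y ^ 2 / c) * (t * b) - 2 * t * u * x * y
      = t * u * (x * c - y * b) ^ 2 / (b * c) := by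
    field_simp
    ring
  have hgap : 0 ≤ t * u * (x * c - y * b) ^ 2 / (b * c) := by positivity
  have hx : t * (x ^ 2 / b) * (t * b) = t ^ 2 * x ^ 2 := by field_simp
  have hy : u * (y ^ 2 / c) * (u * c) = u ^ 2 * y ^ 2 := by field_simp
  nlinarith

theorem concaveOn_sqrt_mul :
    ConcaveOn ℝ (Ici 0 ×ˢ Ici 0) fun p : ℝ × ℝ => √(p.1 * p.2) := by
  refine ⟨(convex_Ici 0).prod (convex_Ici 0), ?_⟩
  rintro ⟨x₁, x₂⟩ ⟨hx₁ : 0 ≤ x₁, hx₂ : 0 ≤ x₂⟩ ⟨y₁, y₂⟩ ⟨hy₁ : 0 ≤ y₁, hy₂ : 0 ≤ y₂⟩ t u ht hu -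
  simp only [Prod.fst_add, Prod.snd_add, Prod.smul_fst, Prod.smul_snd, smul_eq_mul]
  obtain ⟨a, ha, rfl⟩ : ∃ a, 0 ≤ a ∧ a ^ 2 = x₁ := ⟨√x₁, Real.sqrt_nonneg _, Real.sq_sqrt hx₁⟩
  obtain ⟨b, hb, rfl⟩ : ∃ b, 0 ≤ b ∧ b ^ 2 = x₂ := ⟨√x₂, Real.sqrt_nonneg _, Real.sq_sqrt hx₂⟩
  obtain ⟨c, hc, rfl⟩ : ∃ c, 0 ≤ c ∧ c ^ 2 = y₁ := ⟨√y₁, Real.sqrt_nonneg _, Real.sq_sqrt hy₁⟩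
  obtain ⟨d, hd, rfl⟩ : ∃ d, 0 ≤ d ∧ d ^ 2 = y₂ := ⟨√y₂, Real.sqrt_nonneg _, Real.sq_sqrt hy₂⟩
  rw [← mul_pow, ← mul_pow, Real.sqrt_sq (by positivity), Real.sqrt_sq (by positivity)]
  -- Cauchy–Schwarz for `(√t a, √u c)` and `(√t b, √u d)`
  apply Real.le_sqrt_of_sq_le
  nlinarith [mul_nonneg (mul_nonneg ht hu) (sq_nonneg (a * d - b * c))]

theorem ConcaveOn.convexOn_sq_div {E : Type*} [AddCommGroup E] [Module ℝ E] {s : Set E}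
    {h : E → ℝ} (ℓ : E →ₗ[ℝ] ℝ) (hh : ConcaveOn ℝ s h) (hpos : ∀ x ∈ s, 0 < h x) :
    ConvexOn ℝ s fun x => ℓ x ^ 2 / h x := by
  refine ⟨hh.1, fun p hp q hq t u ht hu htu => ?_⟩
  have hden : 0 < t * h p + u * h q := convex_Ioi (0 : ℝ) (hpos p hp) (hpos q hq) ht hu htu
  have hcombo := _root_.convexOn_sq_div.2 (x := (ℓ p, h p)) (y := (ℓ q, h q))
    ⟨trivial, hpos p hp⟩ ⟨trivial, hpos q hq⟩ ht hu htu
  simp only [Prod.fst_add, Prod.snd_add, Prod.smul_fst, Prod.smul_snd, smul_eq_mul] at hcombo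
  calc ℓ (t • p + u • q) ^ 2 / h (t • p + u • q)
      = (t * ℓ p + u * ℓ q) ^ 2 / h (t • p + u • q) := by simp
    _ ≤ (t * ℓ p + u * ℓ q) ^ 2 / (t * h p + u * h q) :=
      div_le_div_of_nonneg_left (sq_nonneg _) hden (hh.2 hp hq ht hu htu)
    _ ≤ t • (ℓ p ^ 2 / h p) + u • (ℓ q ^ 2 / h q) := hcombo

theorem stmt0 (a₁ a₂ : ℝ) (ha₁ : 0 < a₁) (ha₂ : 0 < a₂) :
    ConvexOn ℝ {p : ℝ × ℝ | 0 < p.1 ∧ 0 < p.2}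
      (fun p => a₁ * p.1 ^ 2 / Real.sqrt (p.1 * p.2) - a₂ * Real.sqrt (p.1 * p.2)) := by
  have hquad : {p : ℝ × ℝ | 0 < p.1 ∧ 0 < p.2} ⊆ Ici 0 ×ˢ Ici 0 :=
    fun p hp => ⟨hp.1.le, hp.2.le⟩
  have hgm : ConcaveOn ℝ {p : ℝ × ℝ | 0 < p.1 ∧ 0 < p.2} fun p => √(p.1 * p.2) :=
    concaveOn_sqrt_mul.subset hquad ((convex_Ioi 0).prod (convex_Ioi 0))
  have hpos : ∀ p ∈ {p : ℝ × ℝ | 0 < p.1 ∧ 0 < p.2}, 0 < √(p.1 * p.2) :=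
    fun p hp => Real.sqrt_pos.2 (mul_pos hp.1 hp.2)
  have h := ((hgm.convexOn_sq_div (LinearMap.fst ℝ ℝ ℝ) hpos).smul ha₁.le).sub (hgm.smul ha₂.le)
  refine h.congr fun p _ => ?_
  simp [mul_div_assoc]
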